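/- arXiv:1009.5081 — 4 statements merged into one kernel-verified Lean document; each statement's English description precedes it below -/
import Mathlib

section
/- Let f be a transcendental entire function, R > 0 with M(r) > r for r ≥ R, and define the fast escaping set A(f) = ⋃_{L ∈ ℕ} A_R^{-L}(f). Then A(f) is completely invariant under f: f(A(f)) ⊆ A(f) and f^{-1}(A(f)) ⊆ A(f). -/
open Complex Filter Set Function

noncomputable def maxMod (f : ℂ → ℂ) (r : ℝ) : ℝ :=
  sSup ((fun z => ‖f z‖) '' {z : ℂ | ‖z‖ = r})

def TranscendentalEntire (f : ℂ → ℂ) : Prop :=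
  Differentiable ℂ f ∧ ¬ ∃ p : Polynomial ℂ, ∀ z, f z = p.eval z

noncomputable def ALevel (f : ℂ → ℂ) (R : ℝ) (L : ℤ) : Set ℂ :=
  {z : ℂ | ∀ n : ℕ, 0 ≤ (n : ℤ) + L →
    ‖f^[n] z‖ ≥ (maxMod f)^[((n : ℤ) + L).toNat] R}

noncomputable def Afast (f : ℂ → ℂ) (R : ℝ) : Set ℂ :=
  ⋃ L : ℕ, ALevel f R (-(L : ℤ))

/-
Shifting the orbit by one step moves a point of `A_R^L(f)` into `A_R^{L+1}(f)`, and conversely a point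
whose image lies in `A_R^L(f)` lies in `A_R^{L-1}(f)` as long as `L ≤ 0`, because then the condition at
time `0` is void. Since `M(r) > r` for `r ≥ R`, the iterates `M^k(R)` increase, so the levels decrease
in `L`.
-/

theorem monotone_iterate_apply_of_le_map {α : Type*} [Preorder α] {g : α → α} {a : α}
    (hg : ∀ x, a ≤ x → x ≤ g x) : Monotone fun k => g^[k] a := by
  have ha : ∀ k, a ≤ g^[k] a := by
    intro k
    induction k with
    | zero => exact le_rfl
    | succ k ih => rw [iterate_succ_apply']; exact ih.trans (hg _ ih)
  refine monotone_nat_of_le_succ fun k => ?_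
  rw [iterate_succ_apply']
  exact hg _ (ha k)

section ALevel

variable {f : ℂ → ℂ} {R : ℝ}

theorem mapsTo_ALevel_succ (L : ℤ) : MapsTo f (ALevel f R L) (ALevel f R (L + 1)) := by
  intro z hz n hn
  have hz := hz (n + 1) (by omega)
  rw [iterate_succ_apply] at hz
  convert hz using 3
  omega

theorem ALevel_succ_subset (hM : ∀ r ≥ R, maxMod f r > r) (L : ℤ) :
    ALevel f R (L + 1) ⊆ ALevel f R L := by
  intro z hz n hn
  have hmono := monotone_iterate_apply_of_le_map (fun r hr => (hM r hr).le)
    (Nat.le_succ ((n : ℤ) + L).toNat)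
  refine hmono.trans ((hz n (by omega)).trans_eq' ?_)
  congr 1
  omega

theorem preimage_ALevel_subset_pred {L : ℤ} (hL : L ≤ 0) :
    f ⁻¹' ALevel f R L ⊆ ALevel f R (L - 1) := by
  intro z hz n hn
  obtain ⟨m, rfl⟩ : ∃ m, n = m + 1 := Nat.exists_eq_add_one.mpr (by omega)
  rw [iterate_succ_apply]
  convert hz m (by omega) using 3
  omega

end ALevel

theorem Afast_completely_invariant_general (f : ℂ → ℂ)
    (R : ℝ) (hM : ∀ r ≥ R, maxMod f r > r) :
    f '' (Afast f R) ⊆ Afast f R ∧ f ⁻¹' (Afast f R) ⊆ Afast f R := by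
  constructor
  · rintro _ ⟨z, hz, rfl⟩
    obtain ⟨L, hz⟩ := mem_iUnion.mp hz
    exact mem_iUnion.mpr ⟨L, ALevel_succ_subset hM _ (mapsTo_ALevel_succ _ hz)⟩
  · intro z hz
    obtain ⟨L, hz⟩ := mem_iUnion.mp hz
    refine mem_iUnion.mpr ⟨L + 1, ?_⟩
    rw [Nat.cast_succ, neg_add']
    exact preimage_ALevel_subset_pred (by omega) hz

theorem Afast_completely_invariant (f : ℂ → ℂ) (hf : TranscendentalEntire f)
    (R : ℝ) (hR : 0 < R) (hM : ∀ r ≥ R, maxMod f r > r) :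
    f '' (Afast f R) ⊆ Afast f R ∧ f ⁻¹' (Afast f R) ⊆ Afast f R :=
  Afast_completely_invariant_general f R hM
end

section
/- Let f be a transcendental entire function and let R' > R > 0 both satisfy M(r) > r for r ≥ R. Then ⋃_{L ∈ ℕ} A_{R'}^{-L}(f) = ⋃_{L ∈ ℕ} A_R^{-L}(f); that is, the fast escaping set A(f) is independent of the choice of R. -/
open Complex Filter Set Function

/-!
Comparing `A_{R'}` with `A_R` only needs the iterates `M^[k]` to be monotone on `[R, ∞)`
(maximum modulus principle) and the orbit `M^[m] R` to exceed `R'` for some `m`: then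
`A_R^{-L} ⊆ A_{R'}^{-(L+m)}`, and `A_{R'}^{-L} ⊆ A_R^{-L}` trivially. The orbit is increasing
because `M(r) > r`; if it were bounded, its limit `ℓ` would satisfy `M(ℓ) ≤ ℓ`, since `M` is
lower semicontinuous, being a supremum of the continuous functions `r ↦ |f(rζ)|`.
-/

open Topology

section Iterate

variable {α : Type*} [Preorder α] {g : α → α}

lemma mapsTo_Ici_of_lt {R : α} (hg : ∀ r ≥ R, r < g r) : MapsTo g (Ici R) (Ici R) :=
  fun r hr => hr.trans (hg r hr).le

lemma monotoneOn_iterate_of_mapsTo {s : Set α} (hmaps : MapsTo g s s) (hmono : MonotoneOn g s) :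
    ∀ k : ℕ, MonotoneOn g^[k] s
  | 0 => monotoneOn_id
  | k + 1 => by
    rw [iterate_succ']
    exact hmono.comp (monotoneOn_iterate_of_mapsTo hmaps hmono k) (hmaps.iterate k)

end Iterate

lemma exists_le_iterate_of_lowerSemicontinuousAt {g : ℝ → ℝ} {R : ℝ}
    (hg : ∀ r ≥ R, r < g r) (hlsc : ∀ r ≥ R, LowerSemicontinuousAt g r) (B : ℝ) :
    ∃ m : ℕ, B ≤ g^[m] R := by
  by_contra! hB
  set a : ℕ → ℝ := fun n => g^[n] R
  have ha_ge : ∀ n, R ≤ a n := fun n => (mapsTo_Ici_of_lt hg).iterate n self_mem_Ici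
  have ha_succ : ∀ n, a (n + 1) = g (a n) := fun n => iterate_succ_apply' g n R
  have ha_mono : Monotone a :=
    monotone_nat_of_le_succ fun n => (ha_succ n).symm ▸ (hg _ (ha_ge n)).le
  have hbdd : BddAbove (range a) := ⟨B, forall_mem_range.2 fun n => (hB n).le⟩
  set ℓ := ⨆ n, a n
  have hℓ : R ≤ ℓ := (ha_ge 0).trans (le_ciSup hbdd 0)
  obtain ⟨n, hn⟩ :=
    ((tendsto_atTop_ciSup ha_mono hbdd).eventually (hlsc ℓ hℓ ℓ (hg ℓ hℓ))).exists
  rw [← ha_succ] at hn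
  exact hn.not_ge (le_ciSup hbdd (n + 1))

section MaxMod

variable {f : ℂ → ℂ}

lemma maxMod_eq_sSup_sphere (f : ℂ → ℂ) (r : ℝ) :
    maxMod f r = sSup ((fun z => ‖f z‖) '' Metric.sphere 0 r) := by
  simp only [maxMod, Metric.sphere, dist_zero_right]

lemma norm_le_maxMod (hf : Continuous f) (z : ℂ) : ‖f z‖ ≤ maxMod f ‖z‖ := by
  rw [maxMod_eq_sSup_sphere]
  exact le_csSup ((isCompact_sphere 0 ‖z‖).bddAbove_image (by fun_prop))
    (mem_image_of_mem _ (by simp))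

lemma exists_norm_eq_maxMod (hf : Continuous f) {r : ℝ} (hr : 0 ≤ r) :
    ∃ z : ℂ, ‖z‖ = r ∧ ‖f z‖ = maxMod f r := by
  obtain ⟨z, hz, hmax, -⟩ := (isCompact_sphere (0 : ℂ) r).exists_sSup_image_eq_and_ge
    (NormedSpace.sphere_nonempty.mpr hr) (f := fun z => ‖f z‖) (by fun_prop)
  exact ⟨z, mem_sphere_zero_iff_norm.mp hz, by rw [maxMod_eq_sSup_sphere, hmax]⟩

lemma maxMod_le_maxMod (hf : Differentiable ℂ f) {r s : ℝ} (hr : 0 ≤ r) (hrs : r ≤ s) :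
    maxMod f r ≤ maxMod f s := by
  rcases hrs.eq_or_lt with rfl | hrs
  · rfl
  have hs : 0 < s := hr.trans_lt hrs
  obtain ⟨z, hz, hfz⟩ := exists_norm_eq_maxMod hf.continuous hr
  rw [← hfz]
  refine Complex.norm_le_of_forall_mem_frontier_norm_le (U := Metric.ball 0 s)
    Metric.isBounded_ball hf.diffContOnCl (fun w hw => ?_) ?_
  · rw [frontier_ball 0 hs.ne'] at hw
    simpa [mem_sphere_zero_iff_norm.mp hw] using norm_le_maxMod hf.continuous w
  · rw [closure_ball 0 hs.ne', mem_closedBall_zero_iff, hz]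
    exact hrs.le

lemma lowerSemicontinuousAt_maxMod (hf : Continuous f) {r : ℝ} (hr : 0 < r) :
    LowerSemicontinuousAt (maxMod f) r := by
  intro y hy
  obtain ⟨z, hz, hfz⟩ := exists_norm_eq_maxMod hf hr.le
  have hcont : ContinuousAt (fun s : ℝ => ‖f ((s / r : ℝ) * z)‖) r := by fun_prop
  have hnear : ∀ᶠ s in 𝓝 r, y < ‖f ((s / r : ℝ) * z)‖ :=
    hcont.eventually (lt_mem_nhds (by simpa [hr.ne', hfz] using hy))
  filter_upwards [hnear, lt_mem_nhds hr] with s hys hs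
  have hnorm : ‖((s / r : ℝ) : ℂ) * z‖ = s := by
    rw [norm_mul, hz, Complex.norm_real, Real.norm_of_nonneg (by positivity)]
    field_simp
  exact hys.trans_le ((norm_le_maxMod hf _).trans_eq (by rw [hnorm]))

end MaxMod

section FastEscaping

variable {f : ℂ → ℂ} {R : ℝ}

lemma monotoneOn_iterate_maxMod (hf : Differentiable ℂ f) (hR : 0 < R)
    (hM : ∀ r ≥ R, r < maxMod f r) (k : ℕ) : MonotoneOn (maxMod f)^[k] (Ici R) :=
  monotoneOn_iterate_of_mapsTo (mapsTo_Ici_of_lt hM)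
    (fun _ hr _ _ hrs => maxMod_le_maxMod hf (hR.le.trans hr) hrs) k

lemma ALevel_subset_of_le (hmono : ∀ k, MonotoneOn (maxMod f)^[k] (Ici R)) {R' : ℝ}
    (hRR' : R ≤ R') (L : ℤ) : ALevel f R' L ⊆ ALevel f R L :=
  fun _ hz n hn => (hmono _ self_mem_Ici hRR' hRR').trans (hz n hn)

lemma ALevel_subset_ALevel_sub (hmono : ∀ k, MonotoneOn (maxMod f)^[k] (Ici R)) {R' : ℝ}
    (hRR' : R ≤ R') {m : ℕ} (hm : R' ≤ (maxMod f)^[m] R) (L : ℤ) :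
    ALevel f R L ⊆ ALevel f R' (L - m) := by
  intro z hz n hn
  have hzn := hz n (by omega)
  rw [show ((n : ℤ) + L).toNat = ((n : ℤ) + (L - m)).toNat + m by omega,
    iterate_add_apply] at hzn
  exact (hmono _ hRR' (hRR'.trans hm) hm).trans hzn

end FastEscaping

theorem Afast_independent_of_R (f : ℂ → ℂ) (hf : TranscendentalEntire f)
    (R R' : ℝ) (hR : 0 < R) (hRR' : R < R') (hM : ∀ r ≥ R, maxMod f r > r) :
    Afast f R' = Afast f R := by
  have hmono := monotoneOn_iterate_maxMod hf.1 hR hM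
  obtain ⟨m, hm⟩ := exists_le_iterate_of_lowerSemicontinuousAt hM
    (fun r hr => lowerSemicontinuousAt_maxMod hf.1.continuous (hR.trans_le hr)) R'
  refine (iUnion_mono fun L => ALevel_subset_of_le hmono hRR'.le _).antisymm
    (iUnion_subset fun L => ?_)
  have hshift : -(L : ℤ) - m = -((L + m : ℕ) : ℤ) := by push_cast; ring
  have hsub := ALevel_subset_ALevel_sub hmono hRR'.le hm (-(L : ℤ))
  rw [hshift] at hsub
  exact hsub.trans (subset_iUnion_of_subset (L + m) subset_rfl)
end

section
/- Let f be a transcendental entire function and m ∈ ℕ, m ≥ 1. If z satisfies |f^n(z)| ≥ M^n(R, f) for all n ∈ ℕ (i.e. z ∈ A_R(f)), then |(f^m)^n(z)| ≥ M^n(R, f^m) for all n ∈ ℕ (i.e. z ∈ A_R(f^m)), where R > 0 satisfies M(r, f) > r for r ≥ R. -/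
open Complex Filter Set Function

/-!
By the maximum modulus principle `M(r, g ∘ h) ≤ M(M(r, h), g)`, and `M(·, g)` is monotone, so
`M(r, f^m) ≤ M^m(r, f)` and hence `M^n(R, f^m) ≤ M^{mn}(R, f)`; the hypothesis on `z` at time `mn`
finishes the proof. As `sSup ∅ = 0`, `maxMod g r = 0` for `r < 0`; the inequalities then hold for
every real `r` once `m ≥ 1`.
-/

section maxMod

variable {g h : ℂ → ℂ}

lemma maxMod_nonneg (g : ℂ → ℂ) (r : ℝ) : 0 ≤ maxMod g r :=
  Real.sSup_nonneg (by rintro _ ⟨z, -, rfl⟩; exact norm_nonneg _)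

lemma maxMod_le {r a : ℝ} (hle : ∀ z : ℂ, ‖z‖ = r → ‖g z‖ ≤ a) (ha : 0 ≤ a) :
    maxMod g r ≤ a :=
  Real.sSup_le (by rintro _ ⟨z, hz, rfl⟩; exact hle z hz) ha

lemma norm_le_maxMod_norm (hg : Continuous g) (z : ℂ) : ‖g z‖ ≤ maxMod g ‖z‖ := by
  have hsphere : {w : ℂ | ‖w‖ = ‖z‖} = Metric.sphere 0 ‖z‖ := by ext; simp
  refine le_csSup ?_ ⟨z, rfl, rfl⟩
  rw [hsphere]
  exact ((isCompact_sphere 0 ‖z‖).image (continuous_norm.comp hg)).bddAbove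

lemma norm_le_maxMod_s10 (hg : Differentiable ℂ g) {r : ℝ} {w : ℂ} (hw : ‖w‖ ≤ r) :
    ‖g w‖ ≤ maxMod g r := by
  rcases hw.eq_or_lt with rfl | hw
  · exact norm_le_maxMod_norm hg.continuous w
  have hr : 0 < r := (norm_nonneg w).trans_lt hw
  refine Complex.norm_le_of_forall_mem_frontier_norm_le (Metric.isBounded_ball (x := 0) (r := r))
    hg.diffContOnCl (fun z hz => ?_) (subset_closure (mem_ball_zero_iff.2 hw))
  rw [frontier_ball (0 : ℂ) hr.ne', mem_sphere_zero_iff_norm] at hz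
  simpa [hz] using norm_le_maxMod_norm hg.continuous z

lemma maxMod_mono (hg : Differentiable ℂ g) : Monotone (maxMod g) := fun _ _ hrs =>
  maxMod_le (fun _ hz => norm_le_maxMod_s10 hg (hz.trans_le hrs)) (maxMod_nonneg g _)

lemma maxMod_comp_le (hg : Differentiable ℂ g) (hh : Differentiable ℂ h) (r : ℝ) :
    maxMod (g ∘ h) r ≤ maxMod g (maxMod h r) :=
  maxMod_le (fun _ hz => norm_le_maxMod_s10 hg (norm_le_maxMod_s10 hh hz.le)) (maxMod_nonneg g _)

end maxMod

lemma maxMod_iterate_le {f : ℂ → ℂ} (hf : Differentiable ℂ f) {m : ℕ} (hm : 1 ≤ m) :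
    maxMod (f^[m]) ≤ (maxMod f)^[m] := by
  induction m, hm using Nat.le_induction with
  | base => simp
  | succ m _ ih =>
    intro r
    rw [iterate_succ', iterate_succ_apply']
    exact (maxMod_comp_le hf (hf.iterate m) r).trans (maxMod_mono hf (ih r))

lemma iterate_maxMod_iterate_le {f : ℂ → ℂ} (hf : Differentiable ℂ f) {m : ℕ} (hm : 1 ≤ m)
    (n : ℕ) : (maxMod (f^[m]))^[n] ≤ (maxMod f)^[m * n] := by
  rw [iterate_mul]
  exact (maxMod_mono (hf.iterate m)).iterate_le_of_le (maxMod_iterate_le hf hm) n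

theorem AR_subset_AR_iterate_general (f : ℂ → ℂ) (hf : TranscendentalEntire f)
    (m : ℕ) (hm : 1 ≤ m) (R : ℝ)
    (z : ℂ) (hz : ∀ n : ℕ, ‖f^[n] z‖ ≥ (maxMod f)^[n] R) :
    ∀ n : ℕ, ‖(f^[m])^[n] z‖ ≥ (maxMod (f^[m]))^[n] R := by
  intro n
  calc (maxMod (f^[m]))^[n] R ≤ (maxMod f)^[m * n] R := iterate_maxMod_iterate_le hf.1 hm n R
    _ ≤ ‖f^[m * n] z‖ := hz (m * n)
    _ = ‖(f^[m])^[n] z‖ := by rw [iterate_mul]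

theorem AR_subset_AR_iterate (f : ℂ → ℂ) (hf : TranscendentalEntire f)
    (m : ℕ) (hm : 1 ≤ m) (R : ℝ) (hR : 0 < R) (hM : ∀ r ≥ R, maxMod f r > r)
    (z : ℂ) (hz : ∀ n : ℕ, ‖f^[n] z‖ ≥ (maxMod f)^[n] R) :
    ∀ n : ℕ, ‖(f^[m])^[n] z‖ ≥ (maxMod (f^[m]))^[n] R :=
  AR_subset_AR_iterate_general f hf m hm R z hz
end

section
/- Let f be a transcendental entire function, R > 0 with M(r) > r for r ≥ R, and L ∈ ℤ. Then every connected component of A_R^L(f) is unbounded. (Sketch of proof by contradiction: if K is a bounded component, take a Jordan curve γ in the complement of the closed set A_R^L(f) surrounding K; the sets γ_n = {z ∈ γ : |f^n(z)| ≥ M^{n+L}(R)} are nonempty by the maximum principle, closed, and nested, so their intersection is a point of A_R^L(f) on γ, a contradiction.) -/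
/-! If a component of the closed set `A := ALevel f R L` through `z` were bounded, it could be cut
out of `A` by an open set, which yields a bounded open `U ∋ z` whose frontier misses `A` (this
replaces the Jordan curve of the classical argument). The sets `γ n ⊆ frontier U` on which the
`n`-th inequality defining `A` holds are nonempty by the maximum principle for `f^[n]` on `U`, and
nested because `‖f u‖ < maxMod f s` whenever `‖u‖ < s`; a point of their intersection lies in
`A ∩ frontier U`. -/

open Complex Filter Set Function

open Metric Bornology

section Topology

variable {X : Type*} [TopologicalSpace X]

theorem exists_isClopen_subset_of_connectedComponent_subset [CompactSpace X] [T2Space X]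
    {x : X} {U : Set X} (hU : IsOpen U) (hxU : connectedComponent x ⊆ U) :
    ∃ V, IsClopen V ∧ x ∈ V ∧ V ⊆ U := by
  have hempty : Uᶜ ∩ ⋂ V : {V : Set X // IsClopen V ∧ x ∈ V}, V.1 = ∅ := by
    rw [← connectedComponent_eq_iInter_isClopen, ← disjoint_iff_inter_eq_empty]
    exact disjoint_compl_left_iff_subset.2 hxU
  obtain ⟨s, hs⟩ := hU.isClosed_compl.isCompact.elim_finite_subfamily_closed _
    (fun V => V.2.1.isClosed) hempty
  refine ⟨⋂ V ∈ s, V.1, isClopen_biInter_finset fun V _ => V.2.1,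
    mem_iInter₂.2 fun V _ => V.2.2, fun y hy => ?_⟩
  by_contra hyU
  exact (hs ▸ ⟨hyU, hy⟩ : y ∈ (∅ : Set X))

variable [LocallyCompactSpace X] [T2Space X]

theorem exists_isOpen_isCompact_inter_of_isCompact_closure_connectedComponentIn {F : Set X}
    (hF : IsClosed F) {x : X} (hx : x ∈ F)
    (hK : IsCompact (closure (connectedComponentIn F x))) :
    ∃ O, IsOpen O ∧ x ∈ O ∧ IsCompact (O ∩ F) := by
  obtain ⟨V, hV, hKV, -, hVc⟩ := exists_open_between_and_isCompact_closure hK isOpen_univ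
    (subset_univ _)
  set B := F ∩ closure V
  have hxB : x ∈ B :=
    ⟨hx, subset_closure (hKV (subset_closure (mem_connectedComponentIn hx)))⟩
  have : CompactSpace B := isCompact_iff_compactSpace.1 (hVc.inter_left hF)
  have hcomp : connectedComponent (⟨x, hxB⟩ : B) ⊆ Subtype.val ⁻¹' V := by
    rw [← image_subset_iff, ← connectedComponentIn_eq_image hxB]
    exact (connectedComponentIn_mono x inter_subset_left).trans (subset_closure.trans hKV)
  obtain ⟨C, hC, hxC, hCV⟩ := exists_isClopen_subset_of_connectedComponent_subset
    (hV.preimage continuous_subtype_val) hcomp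
  obtain ⟨W, hW, rfl⟩ := isOpen_induced_iff.1 hC.isOpen
  refine ⟨W ∩ V, hW.inter hV, ⟨hxC, hCV hxC⟩, ?_⟩
  convert hC.isClosed.isCompact.image continuous_subtype_val using 1
  ext w
  constructor
  · rintro ⟨⟨hwW, hwV⟩, hwF⟩
    exact ⟨⟨w, hwF, subset_closure hwV⟩, hwW, rfl⟩
  · rintro ⟨w, hwW, rfl⟩
    exact ⟨⟨hwW, hCV hwW⟩, w.2.1⟩

theorem exists_isOpen_isCompact_closure_disjoint_frontier {O F : Set X} (hO : IsOpen O)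
    (hOF : IsCompact (O ∩ F)) :
    ∃ U, IsOpen U ∧ IsCompact (closure U) ∧ O ∩ F ⊆ U ∧ Disjoint (frontier U) F := by
  obtain ⟨U, hU, hOFU, hUO, hUc⟩ := exists_open_between_and_isCompact_closure hOF hO
    inter_subset_left
  refine ⟨U, hU, hUc, hOFU, disjoint_left.2 fun w hw hwF => ?_⟩
  rw [hU.frontier_eq] at hw
  exact hw.2 (hOFU ⟨hUO hw.1, hwF⟩)

end Topology

section MaximumModulus

variable {f : ℂ → ℂ}

theorem TranscendentalEntire.ne_const (hf : TranscendentalEntire f) (c : ℂ) :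
    f ≠ fun _ => c := by
  rintro rfl
  exact hf.2 ⟨Polynomial.C c, fun _ => (Polynomial.eval_C).symm⟩

theorem norm_le_maxMod_of_norm_eq (hf : Continuous f) {u : ℂ} {s : ℝ} (hu : ‖u‖ = s) :
    ‖f u‖ ≤ maxMod f s := by
  have hsphere : {z : ℂ | ‖z‖ = s} = sphere 0 s := by ext; simp
  refine le_csSup ?_ ⟨u, hu, rfl⟩
  rw [hsphere]
  exact (isCompact_sphere 0 s).bddAbove_image hf.norm.continuousOn

theorem norm_le_maxMod_s13 (hf : Differentiable ℂ f) {u : ℂ} {s : ℝ} (hu : ‖u‖ ≤ s) :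
    ‖f u‖ ≤ maxMod f s := by
  rcases hu.eq_or_lt with hu | hu
  · exact norm_le_maxMod_of_norm_eq hf.continuous hu
  have hs : s ≠ 0 := ((norm_nonneg u).trans_lt hu).ne'
  refine Complex.norm_le_of_forall_mem_frontier_norm_le (isBounded_ball (x := 0) (r := s))
    hf.diffContOnCl (fun w hw => norm_le_maxMod_of_norm_eq hf.continuous ?_) ?_
  · rwa [frontier_ball 0 hs, mem_sphere_zero_iff_norm] at hw
  · rw [closure_ball 0 hs, mem_closedBall_zero_iff]
    exact hu.le

theorem norm_lt_maxMod (hf : Differentiable ℂ f) (hnc : ∀ c : ℂ, f ≠ fun _ => c) {u : ℂ}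
    {s : ℝ} (hu : ‖u‖ < s) : ‖f u‖ < maxMod f s := by
  refine (norm_le_maxMod_s13 hf hu.le).lt_of_ne fun heq => hnc (f u) ?_
  have hmax : IsLocalMax (norm ∘ f) u :=
    IsMaxOn.isLocalMax
      (fun v hv => (norm_le_maxMod_s13 hf (mem_ball_zero_iff.1 hv).le).trans_eq heq.symm)
      (isOpen_ball.mem_nhds (mem_ball_zero_iff.2 hu))
  have hanalytic : AnalyticOnNhd ℂ f univ := analyticOnNhd_univ_iff_differentiable.2 hf
  exact hanalytic.eq_of_eventuallyEq analyticOnNhd_const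
    (Complex.eventually_eq_of_isLocalMax_norm (.of_forall fun v => hf v) hmax)

theorem iterate_maxMod_le_norm_iterate_of_succ (hf : Differentiable ℂ f)
    (hnc : ∀ c : ℂ, f ≠ fun _ => c) {k n : ℕ} {r : ℝ} {w : ℂ}
    (h : (maxMod f)^[k + 1] r ≤ ‖f^[n + 1] w‖) : (maxMod f)^[k] r ≤ ‖f^[n] w‖ := by
  rw [iterate_succ_apply', iterate_succ_apply'] at h
  exact not_lt.1 fun hlt => (norm_lt_maxMod hf hnc hlt).not_ge h

end MaximumModulus

section ALevel

variable {f : ℂ → ℂ} {R : ℝ} {L : ℤ}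

theorem isClosed_ALevel (hf : Continuous f) : IsClosed (ALevel f R L) := by
  simp only [ALevel, ofPred_forall]
  exact isClosed_iInter fun n => isClosed_iInter fun _ =>
    isClosed_le continuous_const (hf.iterate n).norm

theorem frontier_inter_ALevel_nonempty (hf : Differentiable ℂ f)
    (hnc : ∀ c : ℂ, f ≠ fun _ => c) {U : Set ℂ} (hU : IsBounded U) {z : ℂ} (hzU : z ∈ U)
    (hz : z ∈ ALevel f R L) : (frontier U ∩ ALevel f R L).Nonempty := by
  set γ : ℕ → Set ℂ := fun n => frontier U ∩
    {w | 0 ≤ (n : ℤ) + L → (maxMod f)^[((n : ℤ) + L).toNat] R ≤ ‖f^[n] w‖}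
  have hγ_closed (n : ℕ) : IsClosed (γ n) := by
    simp only [γ, ofPred_forall]
    exact isClosed_frontier.inter (isClosed_iInter fun _ =>
      isClosed_le continuous_const (hf.continuous.iterate n).norm)
  have hγ_nested (n : ℕ) : γ (n + 1) ⊆ γ n := by
    rintro w ⟨hw, hwn⟩
    refine ⟨hw, fun hn => iterate_maxMod_le_norm_iterate_of_succ hf hnc ?_⟩
    rw [← show (((n + 1 : ℕ) : ℤ) + L).toNat = ((n : ℤ) + L).toNat + 1 by omega]
    exact hwn (by omega)
  have hγ_nonempty (n : ℕ) : (γ n).Nonempty := by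
    obtain ⟨w, hw, hmax⟩ := Complex.exists_mem_frontier_isMaxOn_norm hU ⟨z, hzU⟩
      (hf.iterate n).diffContOnCl
    exact ⟨w, hw, fun hn => (hz n hn).trans (hmax (subset_closure hzU))⟩
  have hγ_compact : IsCompact (γ 0) :=
    hU.isCompact_closure.of_isClosed_subset (hγ_closed 0)
      (inter_subset_left.trans frontier_subset_closure)
  obtain ⟨w, hw⟩ := IsCompact.nonempty_iInter_of_sequence_nonempty_isCompact_isClosed γ
    hγ_nested hγ_nonempty hγ_compact hγ_closed
  rw [mem_iInter] at hw
  exact ⟨w, (hw 0).1, fun n => (hw n).2⟩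

end ALevel

theorem ALevel_components_unbounded_general (f : ℂ → ℂ) (hf : TranscendentalEntire f)
    (R : ℝ) (L : ℤ) :
    ∀ z ∈ ALevel f R L,
      ¬ Bornology.IsBounded (connectedComponentIn (ALevel f R L) z) := by
  intro z hz hbdd
  have hclosed : IsClosed (ALevel f R L) := isClosed_ALevel hf.1.continuous
  obtain ⟨O, hO, hzO, hOA⟩ :=
    exists_isOpen_isCompact_inter_of_isCompact_closure_connectedComponentIn hclosed hz
      hbdd.isCompact_closure
  obtain ⟨U, -, hUc, hOAU, hdisj⟩ := exists_isOpen_isCompact_closure_disjoint_frontier hO hOA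
  obtain ⟨w, hw, hwA⟩ := frontier_inter_ALevel_nonempty hf.1 hf.ne_const
    (hUc.isBounded.subset subset_closure) (hOAU ⟨hzO, hz⟩) hz
  exact disjoint_left.1 hdisj hw hwA

theorem ALevel_components_unbounded (f : ℂ → ℂ) (hf : TranscendentalEntire f)
    (R : ℝ) (hR : 0 < R) (hM : ∀ r ≥ R, maxMod f r > r) (L : ℤ) :
    ∀ z ∈ ALevel f R L,
      ¬ Bornology.IsBounded (connectedComponentIn (ALevel f R L) z) :=
  ALevel_components_unbounded_general f hf R L
end
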